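/- arXiv:2510.01964 — 5 statements merged into one kernel-verified Lean document; each statement's English description precedes it below -/
import Mathlib

section
/- Let n ≥ 1 and q ≥ 1. Let S, S′ be real n×n matrices and let P, P′ be symmetric real n×n matrices satisfying q⁻¹·I ≤ P ≤ q·I and q⁻¹·I ≤ P′ ≤ q·I in the Loewner order. Then |λ(S,P) − λ(S′,P′)| ≤ q·‖S − S′‖ + q²·‖S‖·‖P − P′‖, where ‖·‖ is the ℓ²-operator norm on matrices. -/
/-!
For every `v ≠ 0` the quotient `vᵀSv / vᵀPv` moves by at most the right-hand side when
`(S, P)` is replaced by `(S', P')`: the numerators differ by at most `‖S - S'‖ |v|²`, the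
denominators by at most `‖P - P'‖ |v|²`, and both denominators are at least `q⁻¹ |v|²`.
A uniform bound on the difference of two families passes to their suprema.
-/

open Matrix

/-- The `ℓ²`-operator norm of a real `n × n` matrix. -/
noncomputable def l2OpNorm {n : ℕ} (M : Matrix (Fin n) (Fin n) ℝ) : ℝ :=
  ‖LinearMap.toContinuousLinearMap (Matrix.toEuclideanLin M)‖

/-- `λ(S, P) = sup over v ∈ ℝⁿ \ {0} of (vᵀ S v) / (vᵀ P v)`. -/
noncomputable def rayleighSup {n : ℕ} (S P : Matrix (Fin n) (Fin n) ℝ) : ℝ :=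
  sSup {r : ℝ | ∃ v : Fin n → ℝ, v ≠ 0 ∧ r = (v ⬝ᵥ S.mulVec v) / (v ⬝ᵥ P.mulVec v)}

section SSup

variable {ι : Type*} {s : Set ι} {f g : ι → ℝ} {C : ℝ}

lemma sSup_image_le_sSup_image_add (hs : s.Nonempty) (hg : BddAbove (g '' s))
    (hfg : ∀ i ∈ s, f i ≤ g i + C) : sSup (f '' s) ≤ sSup (g '' s) + C := by
  refine csSup_le (hs.image f) ?_
  rintro _ ⟨i, hi, rfl⟩
  linarith [hfg i hi, le_csSup hg (Set.mem_image_of_mem g hi)]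

lemma abs_sSup_image_sub_sSup_image_le (hC : 0 ≤ C) (hf : BddAbove (f '' s))
    (hg : BddAbove (g '' s)) (hfg : ∀ i ∈ s, |f i - g i| ≤ C) :
    |sSup (f '' s) - sSup (g '' s)| ≤ C := by
  rcases s.eq_empty_or_nonempty with rfl | hs
  · simpa using hC -- both sides are `sSup ∅ = 0`
  have hf_le : sSup (f '' s) ≤ sSup (g '' s) + C :=
    sSup_image_le_sSup_image_add hs hg fun i hi => by linarith [(abs_sub_le_iff.mp (hfg i hi)).1]
  have hg_le : sSup (g '' s) ≤ sSup (f '' s) + C :=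
    sSup_image_le_sSup_image_add hs hf fun i hi => by linarith [(abs_sub_le_iff.mp (hfg i hi)).2]
  exact abs_sub_le_iff.mpr ⟨by linarith, by linarith⟩

end SSup

section Scalar

variable {a a' b b' t q D₀ D₁ D₂ : ℝ}

lemma inv_le_mul_inv_of_inv_mul_le (ht : 0 < t) (hq : 0 < q) (hb : q⁻¹ * t ≤ b) :
    b⁻¹ ≤ q * t⁻¹ := by
  simpa [mul_inv, mul_comm] using inv_anti₀ (by positivity) hb

lemma div_le_mul_of_abs_le (ht : 0 < t) (hq : 0 < q) (ha : |a| ≤ D₀ * t)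
    (hb : q⁻¹ * t ≤ b) : a / b ≤ q * D₀ := by
  have hb₀ : 0 < b := lt_of_lt_of_le (by positivity) hb
  calc a / b ≤ |a| * b⁻¹ := by
        rw [div_eq_mul_inv]; exact mul_le_mul_of_nonneg_right (le_abs_self a) (by positivity)
    _ ≤ D₀ * t * (q * t⁻¹) :=
        mul_le_mul ha (inv_le_mul_inv_of_inv_mul_le ht hq hb) (by positivity)
          ((abs_nonneg a).trans ha)
    _ = q * D₀ := by field_simp

lemma abs_div_sub_div_le (ht : 0 < t) (hq : 0 < q) (hb : q⁻¹ * t ≤ b) (hb' : q⁻¹ * t ≤ b')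
    (ha : |a| ≤ D₀ * t) (haa' : |a - a'| ≤ D₁ * t) (hbb' : |b - b'| ≤ D₂ * t) :
    |a / b - a' / b'| ≤ q * D₁ + q ^ 2 * D₀ * D₂ := by
  have hb₀ : 0 < b := lt_of_lt_of_le (by positivity) hb
  have hb'₀ : 0 < b' := lt_of_lt_of_le (by positivity) hb'
  have hbinv := inv_le_mul_inv_of_inv_mul_le ht hq hb
  have hb'inv := inv_le_mul_inv_of_inv_mul_le ht hq hb'
  calc |a / b - a' / b'| = |(a - a') * b'⁻¹ + a * (b' - b) * (b⁻¹ * b'⁻¹)| := by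
        congr 1; field_simp; ring
    _ ≤ |a - a'| * b'⁻¹ + |a| * |b - b'| * (b⁻¹ * b'⁻¹) := by
        refine (abs_add_le _ _).trans_eq ?_
        rw [abs_mul, abs_mul, abs_mul, abs_sub_comm b', abs_of_pos (inv_pos.2 hb'₀),
          abs_of_pos (by positivity : 0 < b⁻¹ * b'⁻¹)]
    _ ≤ D₁ * t * (q * t⁻¹) + D₀ * t * (D₂ * t) * (q * t⁻¹ * (q * t⁻¹)) := by
        have hD₀ : 0 ≤ D₀ * t := (abs_nonneg a).trans ha
        have hD₂ : 0 ≤ D₂ * t := (abs_nonneg _).trans hbb'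
        gcongr
        exact (abs_nonneg _).trans haa'
    _ = q * D₁ + q ^ 2 * D₀ * D₂ := by field_simp

end Scalar

lemma abs_dotProduct_mulVec_le {n : ℕ} (M : Matrix (Fin n) (Fin n) ℝ) (v : Fin n → ℝ) :
    |v ⬝ᵥ M *ᵥ v| ≤ l2OpNorm M * (v ⬝ᵥ v) := by
  set w : EuclideanSpace ℝ (Fin n) := WithLp.toLp 2 v
  have hquad : v ⬝ᵥ M *ᵥ v = inner ℝ w (toEuclideanLin M w) := by
    simp [w, EuclideanSpace.inner_toLp_toLp, dotProduct_comm]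
  have hnorm : v ⬝ᵥ v = ‖w‖ ^ 2 := by
    rw [← real_inner_self_eq_norm_sq, EuclideanSpace.inner_toLp_toLp]
    simp
  calc |v ⬝ᵥ M *ᵥ v| ≤ ‖w‖ * ‖toEuclideanLin M w‖ := hquad ▸ abs_real_inner_le_norm _ _
    _ ≤ ‖w‖ * (l2OpNorm M * ‖w‖) :=
        mul_le_mul_of_nonneg_left ((toEuclideanLin M).toContinuousLinearMap.le_opNorm w)
          (norm_nonneg w)
    _ = l2OpNorm M * (v ⬝ᵥ v) := by rw [hnorm]; ring

lemma mul_dotProduct_self_le_of_posSemidef_sub_smul_one {m : Type*} [Fintype m] [DecidableEq m]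
    {P : Matrix m m ℝ} {c : ℝ} (hP : (P - c • (1 : Matrix m m ℝ)).PosSemidef) (v : m → ℝ) :
    c * (v ⬝ᵥ v) ≤ v ⬝ᵥ P *ᵥ v := by
  have h := hP.dotProduct_mulVec_nonneg v
  simp only [sub_mulVec, smul_mulVec, one_mulVec, dotProduct_sub, dotProduct_smul, star_trivial,
    smul_eq_mul] at h
  linarith

lemma dotProduct_self_pos {m : Type*} [Fintype m] {v : m → ℝ} (hv : v ≠ 0) : 0 < v ⬝ᵥ v := by
  simpa using dotProduct_star_self_pos_iff.mpr hv

section Rayleigh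

variable {n : ℕ} {q : ℝ} {S S' P P' : Matrix (Fin n) (Fin n) ℝ}

noncomputable def rayleighQuotient (S P : Matrix (Fin n) (Fin n) ℝ) (v : Fin n → ℝ) : ℝ :=
  (v ⬝ᵥ S *ᵥ v) / (v ⬝ᵥ P *ᵥ v)

lemma rayleighSup_eq_sSup_image (S P : Matrix (Fin n) (Fin n) ℝ) :
    rayleighSup S P = sSup (rayleighQuotient S P '' {v | v ≠ 0}) := by
  simp only [rayleighSup, rayleighQuotient, Set.image, Set.mem_ofPred_eq, eq_comm]

lemma rayleighQuotient_le (hq : 0 < q) (hP : (P - q⁻¹ • (1 : Matrix (Fin n) (Fin n) ℝ)).PosSemidef)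
    {v : Fin n → ℝ} (hv : v ≠ 0) : rayleighQuotient S P v ≤ q * l2OpNorm S :=
  div_le_mul_of_abs_le (dotProduct_self_pos hv) hq (abs_dotProduct_mulVec_le S v)
    (mul_dotProduct_self_le_of_posSemidef_sub_smul_one hP v)

lemma bddAbove_rayleighQuotient_image (hq : 0 < q)
    (hP : (P - q⁻¹ • (1 : Matrix (Fin n) (Fin n) ℝ)).PosSemidef) :
    BddAbove (rayleighQuotient S P '' {v | v ≠ 0}) := by
  refine ⟨q * l2OpNorm S, ?_⟩
  rintro _ ⟨v, hv, rfl⟩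
  exact rayleighQuotient_le hq hP hv

lemma abs_rayleighQuotient_sub_le (hq : 0 < q)
    (hP : (P - q⁻¹ • (1 : Matrix (Fin n) (Fin n) ℝ)).PosSemidef)
    (hP' : (P' - q⁻¹ • (1 : Matrix (Fin n) (Fin n) ℝ)).PosSemidef) {v : Fin n → ℝ} (hv : v ≠ 0) :
    |rayleighQuotient S P v - rayleighQuotient S' P' v| ≤
      q * l2OpNorm (S - S') + q ^ 2 * l2OpNorm S * l2OpNorm (P - P') := by
  have hSS' := abs_dotProduct_mulVec_le (S - S') v
  have hPP' := abs_dotProduct_mulVec_le (P - P') v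
  rw [sub_mulVec, dotProduct_sub] at hSS' hPP'
  exact abs_div_sub_div_le (dotProduct_self_pos hv) hq
    (mul_dotProduct_self_le_of_posSemidef_sub_smul_one hP v)
    (mul_dotProduct_self_le_of_posSemidef_sub_smul_one hP' v) (abs_dotProduct_mulVec_le S v)
    hSS' hPP'

end Rayleigh

theorem stmt0_general {n : ℕ} {q : ℝ} (hq : 1 ≤ q)
    (S S' P P' : Matrix (Fin n) (Fin n) ℝ)
    (hP₁ : (P - q⁻¹ • (1 : Matrix (Fin n) (Fin n) ℝ)).PosSemidef)
    (hP'₁ : (P' - q⁻¹ • (1 : Matrix (Fin n) (Fin n) ℝ)).PosSemidef) :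
    |rayleighSup S P - rayleighSup S' P'| ≤
      q * l2OpNorm (S - S') + q ^ 2 * l2OpNorm S * l2OpNorm (P - P') := by
  have hq₀ : 0 < q := one_pos.trans_le hq
  rw [rayleighSup_eq_sSup_image, rayleighSup_eq_sSup_image]
  exact abs_sSup_image_sub_sSup_image_le
    (by unfold l2OpNorm; positivity)
    (bddAbove_rayleighQuotient_image hq₀ hP₁) (bddAbove_rayleighQuotient_image hq₀ hP'₁)
    fun v hv => abs_rayleighQuotient_sub_le hq₀ hP₁ hP'₁ hv

/-- the matrix Lipschitz estimate `(eq:sigmadiff)` from the proof of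
Lemma 3.7: if `P, P'` are symmetric with `q⁻¹·I ≤ P, P' ≤ q·I` in the Loewner order, then
`|λ(S,P) - λ(S',P')| ≤ q·‖S - S'‖ + q²·‖S‖·‖P - P'‖` in the `ℓ²`-operator norm. -/
theorem stmt0 {n : ℕ} (hn : 1 ≤ n) {q : ℝ} (hq : 1 ≤ q)
    (S S' P P' : Matrix (Fin n) (Fin n) ℝ)
    (hPsymm : P.IsSymm) (hP'symm : P'.IsSymm)
    (hP₁ : (P - q⁻¹ • (1 : Matrix (Fin n) (Fin n) ℝ)).PosSemidef)
    (hP₂ : (q • (1 : Matrix (Fin n) (Fin n) ℝ) - P).PosSemidef)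
    (hP'₁ : (P' - q⁻¹ • (1 : Matrix (Fin n) (Fin n) ℝ)).PosSemidef)
    (hP'₂ : (q • (1 : Matrix (Fin n) (Fin n) ℝ) - P').PosSemidef) :
    |rayleighSup S P - rayleighSup S' P'| ≤
      q * l2OpNorm (S - S') + q ^ 2 * l2OpNorm S * l2OpNorm (P - P') :=
  stmt0_general hq S S' P P' hP₁ hP'₁
end

section
/- Let c₀ ∈ ℝ and c = (c₁,c₂,c₃) ∈ ℝ³, and let M′(c₀,c) be the symmetric 6×6 real matrix M′(c₀,c) = c₀·I₆ + Σ_{ℓ=1}^{3} c_ℓ · [[0, B_ℓ],[B_ℓᵀ, 0]] (2×2 block form with 3×3 blocks). Then the set of eigenvalues of M′(c₀,c) equals {c₀, c₀+|c|/2, c₀−|c|/2}, where |c| = √(c₁²+c₂²+c₃²); in particular M′(c₀,c) is positive definite if and only if c₀ > |c|/2. -/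
/-!
Write `M′(c₀,c) = c₀ + N(c)` with `N(c) = [[0, K],[Kᵀ, 0]]`, where `K = Σ c_ℓ B_ℓ` is half the
cross-product matrix of `c`. Expanding the determinant gives the characteristic polynomial
`t² (t² − |c|²/4)²` of `N(c)`, so its spectrum is `{0, ±|c|/2}`, and the spectrum of `M′(c₀,c)` is
its shift by `c₀`. Since `M′(c₀,c)` is symmetric, it is positive definite iff its spectrum is
positive, i.e. iff its least eigenvalue `c₀ − |c|/2` is positive.
-/

open Matrix

/-- The three `3 × 3` matrices `A_{3,1}, A_{3,2}, A_{3,3}` of Lemma 4.9 of the paper. -/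
noncomputable def B3mats : Fin 3 → Matrix (Fin 3) (Fin 3) ℝ :=
  ![!![0, 0, 0;
      0, 0, -(1/2);
      0, 1/2, 0],
    !![0, 0, 1/2;
      0, 0, 0;
      -(1/2), 0, 0],
    !![0, -(1/2), 0;
      1/2, 0, 0;
      0, 0, 0]]

/-- The symmetric `6 × 6` matrix
`M′(c₀,c) = c₀·I + Σ_ℓ c_ℓ · [[0, B_ℓ],[B_ℓᵀ, 0]]` (with `3 × 3` blocks). -/
noncomputable def M6 (c₀ : ℝ) (c : Fin 3 → ℝ) :
    Matrix (Fin 3 ⊕ Fin 3) (Fin 3 ⊕ Fin 3) ℝ :=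
  c₀ • (1 : Matrix (Fin 3 ⊕ Fin 3) (Fin 3 ⊕ Fin 3) ℝ) +
    ∑ l : Fin 3, c l • Matrix.fromBlocks 0 (B3mats l) (B3mats l)ᵀ 0

open scoped ComplexOrder

theorem Matrix.mem_spectrum_iff_det_eq_zero {n K : Type*} [Fintype n] [DecidableEq n] [Field K]
    {A : Matrix n n K} {r : K} : r ∈ spectrum K A ↔ (scalar n r - A).det = 0 := by
  rw [mem_spectrum_iff_isRoot_charpoly, Polynomial.IsRoot, eval_charpoly]

theorem Matrix.IsHermitian.posDef_iff_forall_spectrum_pos {n 𝕜 : Type*} [Fintype n] [DecidableEq n]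
    [RCLike 𝕜] {A : Matrix n n 𝕜} (hA : A.IsHermitian) :
    A.PosDef ↔ ∀ μ ∈ spectrum ℝ A, 0 < μ := by
  rw [hA.posDef_iff_eigenvalues_pos, hA.spectrum_real_eq_range_eigenvalues, Set.forall_mem_range]

theorem M6_eq_algebraMap_add (c₀ : ℝ) (c : Fin 3 → ℝ) :
    M6 c₀ c = algebraMap ℝ _ c₀ + M6 0 c := by
  simp [M6, Algebra.algebraMap_eq_smul_one]

theorem isHermitian_M6 (c₀ : ℝ) (c : Fin 3 → ℝ) : (M6 c₀ c).IsHermitian := by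
  refine (isHermitian_one.smul (IsSelfAdjoint.all c₀)).add ?_
  refine (isSelfAdjoint_sum (Finset.univ : Finset (Fin 3)) fun l _ => ?_).isHermitian
  refine (IsHermitian.fromBlocks isHermitian_zero ?_ isHermitian_zero).smul (IsSelfAdjoint.all _)
  simp [conjTranspose_eq_transpose_of_trivial]

theorem scalar_sub_M6_zero_eq_reindex (c : Fin 3 → ℝ) (t : ℝ) :
    scalar _ t - M6 0 c = reindex finSumFinEquiv.symm finSumFinEquiv.symm
      !![t, 0, 0, 0, c 2 / 2, -(c 1 / 2);
         0, t, 0, -(c 2 / 2), 0, c 0 / 2;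
         0, 0, t, c 1 / 2, -(c 0 / 2), 0;
         0, -(c 2 / 2), c 1 / 2, t, 0, 0;
         c 2 / 2, 0, -(c 0 / 2), 0, t, 0;
         -(c 1 / 2), c 0 / 2, 0, 0, 0, t] := by
  ext (i | i) (j | j) <;> fin_cases i <;> fin_cases j <;>
    simp [M6, B3mats, Fin.sum_univ_succ, finSumFinEquiv] <;> ring

theorem det_scalar_sub_M6_zero (c : Fin 3 → ℝ) (t : ℝ) :
    (scalar _ t - M6 0 c).det = t ^ 2 * (t ^ 2 - (c 0 ^ 2 + c 1 ^ 2 + c 2 ^ 2) / 4) ^ 2 := by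
  rw [scalar_sub_M6_zero_eq_reindex, det_reindex_self]
  simp [det_succ_row_zero, Fin.sum_univ_succ, Fin.succAbove]
  ring

theorem spectrum_M6_zero (c : Fin 3 → ℝ) {q : ℝ} (hq : q ^ 2 = c 0 ^ 2 + c 1 ^ 2 + c 2 ^ 2) :
    spectrum ℝ (M6 0 c) = {0, q / 2, -(q / 2)} := by
  ext t
  have hdet : (scalar _ t - M6 0 c).det = t ^ 2 * (t - q / 2) ^ 2 * (t + q / 2) ^ 2 := by
    rw [det_scalar_sub_M6_zero, ← hq]
    ring
  rw [mem_spectrum_iff_det_eq_zero, hdet]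
  simp [sub_eq_zero, add_eq_zero_iff_eq_neg, or_assoc]

theorem spectrum_M6 (c₀ : ℝ) (c : Fin 3 → ℝ) {q : ℝ} (hq : q ^ 2 = c 0 ^ 2 + c 1 ^ 2 + c 2 ^ 2) :
    spectrum ℝ (M6 c₀ c) = {c₀, c₀ + q / 2, c₀ - q / 2} := by
  rw [M6_eq_algebraMap_add, ← spectrum.singleton_add_eq, spectrum_M6_zero c hq]
  simp [Set.singleton_add, Set.image_insert_eq, sub_eq_add_neg]

/-- Remark 4.12 (case k = 3) of the paper: the set of eigenvalues of
`M′(c₀,c)` is `{c₀, c₀ ± |c|/2}`; in particular `M′(c₀,c)` is positive definite iff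
`c₀ > |c|/2`. -/
theorem stmt2 (c₀ : ℝ) (c : Fin 3 → ℝ) :
    spectrum ℝ (M6 c₀ c) =
      {c₀, c₀ + Real.sqrt ((c 0) ^ 2 + (c 1) ^ 2 + (c 2) ^ 2) / 2,
           c₀ - Real.sqrt ((c 0) ^ 2 + (c 1) ^ 2 + (c 2) ^ 2) / 2} ∧
    ((M6 c₀ c).PosDef ↔ Real.sqrt ((c 0) ^ 2 + (c 1) ^ 2 + (c 2) ^ 2) / 2 < c₀) := by
  have hspec := spectrum_M6 c₀ c (Real.sq_sqrt (by positivity))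
  refine ⟨hspec, ?_⟩
  have hq := Real.sqrt_nonneg ((c 0) ^ 2 + (c 1) ^ 2 + (c 2) ^ 2)
  rw [(isHermitian_M6 c₀ c).posDef_iff_forall_spectrum_pos, hspec]
  simp only [Set.mem_insert_iff, Set.mem_singleton_iff, forall_eq_or_imp, forall_eq]
  exact ⟨fun h => by linarith [h.2.2], fun h => ⟨by linarith, by linarith, by linarith⟩⟩
end

section
/- For all τ ∈ (0,π) and a ∈ [−1,1), the quantity √(1−a)·cos(τ/2) + √(1+a)·sin(τ/2) is strictly positive, and the identity sin τ / (2·√((1−cos τ)(1−a))) − (√(1−a²)/(2(1−a)))·√((1−cos τ)/(1−a)) = (cos τ − a) / (√2·(1−a)·(√(1−a)·cos(τ/2) + √(1+a)·sin(τ/2))) holds. In particular, if moreover cos τ > a then the left-hand side is strictly positive. -/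
/-!
Put `u = √(1 - a)`, `v = √(1 + a)`, `s = sin (τ / 2)`, `c = cos (τ / 2)`. Half-angle formulas
turn every square root on the left into a monomial (`√((1 - cos τ)(1 - a)) = √2 s u`, etc.),
and the left side collapses to `(u c - v s) / (√2 u²)`. On the other hand
`cos τ - a = (1 - a) c² - (1 + a) s² = (u c - v s)(u c + v s)`, and `u c + v s > 0` for
`τ ∈ (0, π)` since then `c > 0`, `s ≥ 0`.
-/

open Real

lemma Real.one_sub_cos_eq_two_mul_sin_half_sq (x : ℝ) : 1 - cos x = 2 * sin (x / 2) ^ 2 := by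
  rw [sin_sq_eq_half_sub, mul_div_cancel₀ x two_ne_zero]
  ring

lemma Real.sin_eq_two_mul_sin_half_mul_cos_half (x : ℝ) :
    sin x = 2 * sin (x / 2) * cos (x / 2) := by
  rw [← sin_two_mul, mul_div_cancel₀ x two_ne_zero]

lemma Real.cos_sub_eq_mul_sqrt_sub_mul_sqrt_add {a : ℝ} (ha₁ : -1 ≤ a) (ha₂ : a ≤ 1) (x : ℝ) :
    cos x - a = (√(1 - a) * cos (x / 2) - √(1 + a) * sin (x / 2)) *
      (√(1 - a) * cos (x / 2) + √(1 + a) * sin (x / 2)) := by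
  have hu : √(1 - a) ^ 2 = 1 - a := sq_sqrt (by linarith)
  have hv : √(1 + a) ^ 2 = 1 + a := sq_sqrt (by linarith)
  have hx : cos x = cos (x / 2) ^ 2 - sin (x / 2) ^ 2 := by
    rw [← cos_two_mul', mul_div_cancel₀ x two_ne_zero]
  linear_combination
    hx - cos (x / 2) ^ 2 * hu + sin (x / 2) ^ 2 * hv + a * sin_sq_add_cos_sq (x / 2)

lemma Real.sqrt_mul_cos_half_add_sqrt_mul_sin_half_pos {a x : ℝ} (ha : a < 1) (hx₀ : 0 ≤ x)
    (hx : x < π) : 0 < √(1 - a) * cos (x / 2) + √(1 + a) * sin (x / 2) := by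
  have hc : 0 < cos (x / 2) := cos_pos_of_mem_Ioo ⟨by linarith [pi_pos], by linarith⟩
  have hs : 0 ≤ sin (x / 2) := sin_nonneg_of_nonneg_of_le_pi (by linarith) (by linarith)
  have hu : 0 < √(1 - a) := sqrt_pos.2 (by linarith)
  positivity

lemma Real.sin_div_sub_sqrt_mul_sqrt_eq_half_angle {a x : ℝ} (ha : a < 1) (hx₀ : 0 < x)
    (hx : x < 2 * π) :
    sin x / (2 * √((1 - cos x) * (1 - a)))
        - √(1 - a ^ 2) / (2 * (1 - a)) * √((1 - cos x) / (1 - a))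
      = (√(1 - a) * cos (x / 2) - √(1 + a) * sin (x / 2)) / (√2 * (1 - a)) := by
  have hs : 0 < sin (x / 2) := sin_pos_of_pos_of_lt_pi (by linarith) (by linarith)
  have hu : 0 < √(1 - a) := sqrt_pos.2 (by linarith)
  have hu2 : √(1 - a) ^ 2 = 1 - a := sq_sqrt (by linarith)
  have h2 : √2 ^ 2 = 2 := sq_sqrt zero_le_two
  have hprod : √((1 - cos x) * (1 - a)) = √2 * sin (x / 2) * √(1 - a) := by
    rw [← sqrt_sq (by positivity : 0 ≤ √2 * sin (x / 2) * √(1 - a)), mul_pow, mul_pow, h2, hu2,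
      one_sub_cos_eq_two_mul_sin_half_sq]
  have hquot : √((1 - cos x) / (1 - a)) = √2 * sin (x / 2) / √(1 - a) := by
    rw [← sqrt_sq (by positivity : 0 ≤ √2 * sin (x / 2) / √(1 - a)), div_pow, mul_pow, h2, hu2,
      one_sub_cos_eq_two_mul_sin_half_sq]
  have hsq : √(1 - a ^ 2) = √(1 - a) * √(1 + a) := by
    rw [← sqrt_mul (by linarith)]
    ring_nf
  rw [hprod, hquot, hsq, sin_eq_two_mul_sin_half_mul_cos_half]
  have hne : 1 - a ≠ 0 := (sub_pos.2 ha).ne'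
  field_simp
  linear_combination (-2 * cos (x / 2)) * hu2 - (sin (x / 2) * √(1 - a) * √(1 + a)) * h2

/-- the identity `(eq:Phi/h)` of Lemma 5.2, in the variables `(τ, a)`:
for `τ ∈ (0,π)` and `a ∈ [-1,1)`, the quantity `√(1-a)·cos(τ/2) + √(1+a)·sin(τ/2)` is
positive, the stated identity holds, and if moreover `cos τ > a` the left-hand side is
positive. -/
theorem stmt4 (τ a : ℝ) (hτ : τ ∈ Set.Ioo (0 : ℝ) Real.pi) (ha : a ∈ Set.Ico (-1 : ℝ) 1) :
    0 < Real.sqrt (1 - a) * Real.cos (τ / 2) + Real.sqrt (1 + a) * Real.sin (τ / 2) ∧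
    Real.sin τ / (2 * Real.sqrt ((1 - Real.cos τ) * (1 - a)))
        - Real.sqrt (1 - a ^ 2) / (2 * (1 - a)) * Real.sqrt ((1 - Real.cos τ) / (1 - a))
      = (Real.cos τ - a) /
          (Real.sqrt 2 * (1 - a) *
            (Real.sqrt (1 - a) * Real.cos (τ / 2) + Real.sqrt (1 + a) * Real.sin (τ / 2))) ∧
    (a < Real.cos τ →
      0 < Real.sin τ / (2 * Real.sqrt ((1 - Real.cos τ) * (1 - a)))
          - Real.sqrt (1 - a ^ 2) / (2 * (1 - a)) * Real.sqrt ((1 - Real.cos τ) / (1 - a))) := by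
  obtain ⟨hτ₀, hτπ⟩ := hτ
  obtain ⟨ha₁, ha₂⟩ := ha
  have hpos := sqrt_mul_cos_half_add_sqrt_mul_sin_half_pos ha₂ hτ₀.le hτπ
  have heq : sin τ / (2 * √((1 - cos τ) * (1 - a))) - √(1 - a ^ 2) / (2 * (1 - a)) *
      √((1 - cos τ) / (1 - a)) = (cos τ - a) /
        (√2 * (1 - a) * (√(1 - a) * cos (τ / 2) + √(1 + a) * sin (τ / 2))) := by
    rw [sin_div_sub_sqrt_mul_sqrt_eq_half_angle ha₂ hτ₀ (by linarith [pi_pos]),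
      cos_sub_eq_mul_sqrt_sub_mul_sqrt_add ha₁ ha₂.le, mul_div_mul_right _ _ hpos.ne']
  refine ⟨hpos, heq, fun hlt => heq ▸ div_pos (sub_pos.2 hlt) ?_⟩
  have : 0 < 1 - a := sub_pos.2 ha₂
  positivity
end

section
/- Let s ∈ (0,1]. Let τ ∈ [0,π) and ξ = (ξ¹,ξ²,ξ³,ξ⁴) ∈ S³ be such that ℏ(τ,ξ) > 0, cos τ ≥ ξ⁴, (τ,ξ) ≠ (0,(0,0,0,1)), and 𝔰(τ,ξ) ≤ s. Then τ < π/2 with tan τ ≤ (2/3)·s (equivalently τ ≤ arctan((2/3)s)), and (1−s²)/(1+s²) ≤ ξ⁴ < 1. -/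
/-!
Since `|ξ⁴| ≤ cos τ` (from `h ≥ 0` and `ℏ > 0`), we get `sin τ ≤ √(1 - (ξ⁴)²)` and
`cos τ + ξ⁴ ≤ 2 cos τ`, so `𝔰 ≤ s` gives `3 sin τ ≤ 2 s cos τ`, i.e. `tan τ ≤ (2/3) s`.
Using instead `cos τ ≤ 1`, it gives `√((1 - ξ⁴)(1 + ξ⁴)) ≤ s (1 + ξ⁴)`, which solves to
`ξ⁴ ≥ (1 - s²)/(1 + s²)`. Finally `ξ⁴ = 1` would force `cos τ = 1`, i.e. the point `i₀`.
-/

open Real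

lemma sin_le_sqrt_one_sub_sq_of_abs_le_cos {τ x : ℝ} (hx : |x| ≤ cos τ) :
    sin τ ≤ √(1 - x ^ 2) := by
  refine le_sqrt_of_sq_le ?_
  have hx2 : x ^ 2 ≤ cos τ ^ 2 := sq_le_sq' (abs_le.mp hx).1 (abs_le.mp hx).2
  linarith [sin_sq_add_cos_sq τ]

lemma one_sub_sq_div_one_add_sq_le_of_sqrt_one_sub_sq_le {s x : ℝ} (hx : -1 < x)
    (h : √(1 - x ^ 2) ≤ s * (1 + x)) : (1 - s ^ 2) / (1 + s ^ 2) ≤ x := by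
  have hsq : 1 - x ^ 2 ≤ (s * (1 + x)) ^ 2 :=
    (sqrt_le_left ((sqrt_nonneg _).trans h)).mp h
  -- dividing `(1 - x) (1 + x) ≤ s² (1 + x)²` by `1 + x > 0` gives `1 - x ≤ s² (1 + x)`
  have hlin : 1 - x ≤ s ^ 2 * (1 + x) := by nlinarith
  rw [div_le_iff₀ (by positivity)]
  linarith

lemma eq_of_sum_sq_eq_one_of_apply_three_eq_one {ξ : Fin 4 → ℝ}
    (hξ : ξ 0 ^ 2 + ξ 1 ^ 2 + ξ 2 ^ 2 + ξ 3 ^ 2 = 1) (h3 : ξ 3 = 1) :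
    ξ = ![0, 0, 0, 1] := by
  rw [h3] at hξ
  have h0 : ξ 0 = 0 := by nlinarith [sq_nonneg (ξ 0), sq_nonneg (ξ 1), sq_nonneg (ξ 2)]
  have h1 : ξ 1 = 0 := by nlinarith [sq_nonneg (ξ 0), sq_nonneg (ξ 1), sq_nonneg (ξ 2)]
  have h2 : ξ 2 = 0 := by nlinarith [sq_nonneg (ξ 0), sq_nonneg (ξ 1), sq_nonneg (ξ 2)]
  ext i
  fin_cases i <;> simp [h0, h1, h2, h3]

lemma le_arctan_of_tan_le {τ a : ℝ} (h₁ : -(π / 2) < τ) (h₂ : τ < π / 2) (h : tan τ ≤ a) :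
    τ ≤ arctan a := by
  rw [← arctan_tan h₁ h₂]
  exact arctan_le_arctan_iff.mpr h

/-- Remark 5.1 (rem:Dstau) of the paper. On the region near spacelike
infinity where `ℏ = cos τ + ξ⁴ > 0`, `cos τ ≥ ξ⁴`, `(τ,ξ) ≠ i₀ = (0,(0,0,0,1))` and
`𝔰 = (2 sin τ + √(1-(ξ⁴)²))/ℏ ≤ s`, one has `τ ∈ [0, arctan((2/3)s)]` and
`ξ⁴ ∈ [(1-s²)/(1+s²), 1)`. Here `ξ = (ξ¹,ξ²,ξ³,ξ⁴)` is a point of `S³ ⊆ ℝ⁴`,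
indexed so that `ξ 3 = ξ⁴`. -/
theorem stmt5 (s : ℝ) (hs : s ∈ Set.Ioc (0 : ℝ) 1)
    (τ : ℝ) (hτ : τ ∈ Set.Ico (0 : ℝ) Real.pi)
    (ξ : Fin 4 → ℝ) (hξ : (ξ 0) ^ 2 + (ξ 1) ^ 2 + (ξ 2) ^ 2 + (ξ 3) ^ 2 = 1)
    (hhbar : 0 < Real.cos τ + ξ 3)
    (hh : ξ 3 ≤ Real.cos τ)
    (hne : ¬(τ = 0 ∧ ξ = ![0, 0, 0, 1]))
    (hsle : (2 * Real.sin τ + Real.sqrt (1 - (ξ 3) ^ 2)) / (Real.cos τ + ξ 3) ≤ s) :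
    τ < Real.pi / 2 ∧ Real.tan τ ≤ 2 / 3 * s ∧ τ ≤ Real.arctan (2 / 3 * s) ∧
    (1 - s ^ 2) / (1 + s ^ 2) ≤ ξ 3 ∧ ξ 3 < 1 := by
  obtain ⟨hs0, -⟩ := hs
  obtain ⟨hτ0, hτπ⟩ := hτ
  have hcos : 0 < cos τ := by linarith
  have hτ2 : τ < π / 2 := by
    by_contra! h
    linarith [cos_nonpos_of_pi_div_two_le_of_le h (by linarith)]
  have hkey : 2 * sin τ + √(1 - ξ 3 ^ 2) ≤ s * (cos τ + ξ 3) := (div_le_iff₀ hhbar).mp hsle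
  have hsin : sin τ ≤ √(1 - ξ 3 ^ 2) :=
    sin_le_sqrt_one_sub_sq_of_abs_le_cos (abs_le.mpr ⟨by linarith, hh⟩)
  have h3sin : 3 * sin τ ≤ 2 * s * cos τ := by nlinarith
  have htan : tan τ ≤ 2 / 3 * s := by
    rw [tan_eq_sin_div_cos, div_le_iff₀ hcos]
    linarith
  have hξ1 : ξ 3 < 1 := by
    refine (hh.trans (cos_le_one τ)).lt_of_ne fun h3 => hne ⟨?_, ?_⟩
    · have hcos1 : cos τ = 1 := le_antisymm (cos_le_one τ) (h3 ▸ hh)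
      exact (cos_eq_one_iff_of_lt_of_lt (by linarith) (by linarith)).mp hcos1
    · exact eq_of_sum_sq_eq_one_of_apply_three_eq_one hξ h3
  have hsqrt : √(1 - ξ 3 ^ 2) ≤ s * (1 + ξ 3) := calc
    √(1 - ξ 3 ^ 2) ≤ s * (cos τ + ξ 3) := by
      linarith [sin_nonneg_of_nonneg_of_le_pi hτ0 hτπ.le]
    _ ≤ s * (1 + ξ 3) := by gcongr; exact cos_le_one τ
  have hlb : (1 - s ^ 2) / (1 + s ^ 2) ≤ ξ 3 :=
    one_sub_sq_div_one_add_sq_le_of_sqrt_one_sub_sq_le (by linarith [cos_le_one τ]) hsqrt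
  exact ⟨hτ2, htan, le_arctan_of_tan_le (by linarith) hτ2 htan, hlb, hξ1⟩
end

section
/- Let g : (−∞,0] → ℝ be continuous, let φ : (−∞,0] → [0,∞] be measurable, and let k ∈ ℕ. For z₁, z₀ ≤ 0 set P(z₁,z₀) = exp(∫_{z₀}^{z₁} g(w) dw), and for z ≤ 0 set F(z) = ∫_{−∞}^{z} P(z,z′)·(1+|z−z′|)^k·φ(z′) dz′ ∈ [0,∞]. Then for every z ≤ 0, F(z) ≤ P(z,0)·F(0). -/
/-!
Splitting `∫_{z'}^{z} g = ∫_{z'}^{0} g + ∫_{0}^{z} g` factors the propagator as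
`P(z,z') = P(z,0) · P(0,z')`, and for `z' ≤ z ≤ 0` the weight `(1+|z-z'|)^k` is at most
`(1+|0-z'|)^k`. So the integrand of `F(z)` is pointwise at most `P(z,0)` times the integrand
of `F(0)`, and `F(0)` integrates over the larger half-line `(-∞,0] ⊇ (-∞,z]`.
-/

open MeasureTheory Set

theorem MeasureTheory.setLIntegral_le_const_mul_setLIntegral {α : Type*} [MeasurableSpace α]
    {μ : Measure α} {s t : Set α} {f g : α → ENNReal} {c : ENNReal} (hc : c ≠ ⊤)
    (hs : MeasurableSet s) (hst : s ⊆ t) (hfg : ∀ x ∈ s, f x ≤ c * g x) :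
    ∫⁻ x in s, f x ∂μ ≤ c * ∫⁻ x in t, g x ∂μ :=
  calc ∫⁻ x in s, f x ∂μ ≤ ∫⁻ x in s, c * g x ∂μ := setLIntegral_mono' hs hfg
    _ = c * ∫⁻ x in s, g x ∂μ := lintegral_const_mul' c g hc
    _ ≤ c * ∫⁻ x in t, g x ∂μ := by gcongr

theorem Real.exp_integral_eq_mul_of_le {g : ℝ → ℝ} {a z z' : ℝ} (hg : ContinuousOn g (Iic a))
    (hz' : z' ≤ z) (hz : z ≤ a) :
    Real.exp (∫ w in z'..z, g w) = Real.exp (∫ w in a..z, g w) * Real.exp (∫ w in z'..a, g w) := by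
  have hint : ∀ b c, b ≤ a → c ≤ a → IntervalIntegrable g volume b c := fun b c hb hc =>
    (hg.mono fun x hx => hx.2.trans (max_le hb hc)).intervalIntegrable
  rw [← intervalIntegral.integral_add_adjacent_intervals (hint z' a (hz'.trans hz) le_rfl)
    (hint a z le_rfl hz), Real.exp_add, mul_comm]

theorem Real.exp_integral_mul_one_add_abs_pow_le {g : ℝ → ℝ} {a z z' : ℝ}
    (hg : ContinuousOn g (Iic a)) (hz' : z' ≤ z) (hz : z ≤ a) (k : ℕ) :
    Real.exp (∫ w in z'..z, g w) * (1 + |z - z'|) ^ k ≤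
      Real.exp (∫ w in a..z, g w) * (Real.exp (∫ w in z'..a, g w) * (1 + |a - z'|) ^ k) := by
  have hweight : 1 + |z - z'| ≤ 1 + |a - z'| := by
    rw [abs_of_nonneg (sub_nonneg.2 hz'), abs_of_nonneg (sub_nonneg.2 (hz'.trans hz))]
    linarith
  rw [Real.exp_integral_eq_mul_of_le hg hz' hz, mul_assoc]
  gcongr

theorem stmt17_general (g : ℝ → ℝ) (hg : ContinuousOn g (Set.Iic (0 : ℝ)))
    (φ : ℝ → ENNReal) (k : ℕ) :
    ∀ z : ℝ, z ≤ 0 →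
      (∫⁻ z' in Set.Iic z,
          ENNReal.ofReal (Real.exp (∫ w in z'..z, g w) * (1 + |z - z'|) ^ k) * φ z') ≤
        ENNReal.ofReal (Real.exp (∫ w in (0 : ℝ)..z, g w)) *
          ∫⁻ z' in Set.Iic (0 : ℝ),
            ENNReal.ofReal (Real.exp (∫ w in z'..(0 : ℝ), g w) * (1 + |(0 : ℝ) - z'|) ^ k) *
              φ z' := by
  intro z hz
  refine setLIntegral_le_const_mul_setLIntegral ENNReal.ofReal_ne_top measurableSet_Iic
    (Iic_subset_Iic.2 hz) fun z' (hz' : z' ≤ z) => ?_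
  rw [← mul_assoc, ← ENNReal.ofReal_mul (Real.exp_nonneg _)]
  gcongr ?_ * _
  exact ENNReal.ofReal_le_ofReal (Real.exp_integral_mul_one_add_abs_pow_le hg hz' hz k)

/-- the propagator monotonicity estimate `(eq:fconstbd)`/`(eq:fconstbdk)`
from the proof of Theorem 3.18: with `P(z₁,z₀) = exp(∫_{z₀}^{z₁} g)` and
`F(z) = ∫_{-∞}^{z} P(z,z')·(1+|z-z'|)^k·φ(z') dz' ∈ [0,∞]`, one has
`F(z) ≤ P(z,0)·F(0)` for every `z ≤ 0`. -/
theorem stmt17 (g : ℝ → ℝ) (hg : ContinuousOn g (Set.Iic (0 : ℝ)))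
    (φ : ℝ → ENNReal) (hφ : Measurable φ) (k : ℕ) :
    ∀ z : ℝ, z ≤ 0 →
      (∫⁻ z' in Set.Iic z,
          ENNReal.ofReal (Real.exp (∫ w in z'..z, g w) * (1 + |z - z'|) ^ k) * φ z') ≤
        ENNReal.ofReal (Real.exp (∫ w in (0 : ℝ)..z, g w)) *
          ∫⁻ z' in Set.Iic (0 : ℝ),
            ENNReal.ofReal (Real.exp (∫ w in z'..(0 : ℝ), g w) * (1 + |(0 : ℝ) - z'|) ^ k) *
              φ z' :=
  stmt17_general g hg φ k
end
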